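/- arXiv:1203.2124 — 2 statements merged into one kernel-verified Lean document; each statement's English description precedes it below -/
import Mathlib

section
/- Let a = (a₁,a₂,a₃), b = (b₁,b₂,b₃) ∈ ℤ³ satisfy σ₁(a) = σ₁(b), and let c ≠ d be integers. Then |σ₃(q_c)| = |σ₃(q_d)| if and only if either σ₂(a) = σ₂(b) or (c + d)(σ₂(a) − σ₂(b)) = (σ₃(a) − σ₃(b)) − (σ₁(a) + 1)(σ₂(a) − σ₂(b)). -/
/-!
Because σ₁(a) = σ₁(b), the cubic and quadratic terms in `e` cancel when σ₃(q_e) is expanded, and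
σ₃(q_e) = 8(A − 2eE) with E = σ₂(a) − σ₂(b) and A = (σ₃(a) − σ₃(b)) − (σ₁(a) + 1)E is affine in `e`.
An affine function takes values of equal absolute value at c ≠ d exactly when it is constant or
vanishes at the midpoint (c + d)/2.
-/

/-- The `k`-th elementary symmetric polynomial of the entries of a tuple `x : Fin n → ℤ`. -/
def esymm {n : ℕ} (k : ℕ) (x : Fin n → ℤ) : ℤ :=
  ∑ s ∈ Finset.powersetCard k (Finset.univ : Finset (Fin n)), ∏ i ∈ s, x i

/-- For integer triples `a`, `b` and `e : ℤ`, the 6-tuple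
`q_e = (2(a₁+e)+1, 2(a₂+e)+1, 2(a₃+e)+1, −2(b₁+e)−1, −2(b₂+e)−1, −2(b₃+e)−1)`. -/
def qTuple (a b : Fin 3 → ℤ) (e : ℤ) : Fin 6 → ℤ :=
  ![2 * (a 0 + e) + 1, 2 * (a 1 + e) + 1, 2 * (a 2 + e) + 1,
    -2 * (b 0 + e) - 1, -2 * (b 1 + e) - 1, -2 * (b 2 + e) - 1]

theorem Multiset.esymm_cons_succ {R : Type*} [CommSemiring R] (s : Multiset R) (y : R) (k : ℕ) :
    (y ::ₘ s).esymm (k + 1) = y * s.esymm k + s.esymm (k + 1) := by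
  simp [Multiset.esymm, Multiset.sum_map_mul_left, add_comm]

theorem esymm_eq_multiset_esymm {n : ℕ} (k : ℕ) (x : Fin n → ℤ) :
    esymm k x = (Finset.univ.val.map x).esymm k :=
  (Finset.esymm_map_val x _ k).symm

theorem esymm_zero {n : ℕ} (x : Fin n → ℤ) : esymm 0 x = 1 := by
  simp [esymm]

theorem esymm_succ_of_fin_zero (k : ℕ) (x : Fin 0 → ℤ) : esymm (k + 1) x = 0 := by
  simp [esymm_eq_multiset_esymm, Multiset.esymm, Multiset.powersetCard_zero_right]

theorem esymm_succ {n : ℕ} (k : ℕ) (x : Fin (n + 1) → ℤ) :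
    esymm (k + 1) x = x 0 * esymm k (Fin.tail x) + esymm (k + 1) (Fin.tail x) := by
  simp only [esymm_eq_multiset_esymm, Fin.univ_val_map, List.ofFn_succ, ← Multiset.cons_coe,
    Multiset.esymm_cons_succ]
  rfl

section FinThree

variable (x : Fin 3 → ℤ)

theorem esymm_one_fin_three : esymm 1 x = x 0 + x 1 + x 2 := by
  simp only [esymm_succ, Fin.tail, Fin.succ_zero_eq_one, Fin.succ_one_eq_two, esymm_zero,
    esymm_succ_of_fin_zero]
  ring

theorem esymm_two_fin_three : esymm 2 x = x 0 * x 1 + x 0 * x 2 + x 1 * x 2 := by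
  simp only [esymm_succ, Fin.tail, Fin.succ_zero_eq_one, Fin.succ_one_eq_two, esymm_zero,
    esymm_succ_of_fin_zero]
  ring

theorem esymm_three_fin_three : esymm 3 x = x 0 * x 1 * x 2 := by
  simp only [esymm_succ, Fin.tail, Fin.succ_zero_eq_one, Fin.succ_one_eq_two, esymm_zero,
    esymm_succ_of_fin_zero]
  ring

end FinThree

theorem esymm_three_qTuple (a b : Fin 3 → ℤ) (e : ℤ) (hsum : esymm 1 a = esymm 1 b) :
    esymm 3 (qTuple a b e) =
      8 * ((esymm 3 a - esymm 3 b) - (esymm 1 a + 1) * (esymm 2 a - esymm 2 b)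
        - 2 * e * (esymm 2 a - esymm 2 b)) := by
  rw [esymm_one_fin_three, esymm_one_fin_three] at hsum
  rw [esymm_one_fin_three, esymm_two_fin_three, esymm_two_fin_three, esymm_three_fin_three,
    esymm_three_fin_three]
  simp only [qTuple, esymm_succ, Fin.tail_vecCons, Matrix.cons_val_zero, Matrix.cons_val_fin_one, esymm_zero,
    esymm_succ_of_fin_zero]
  linear_combination (8 * (a 0 * a 1 + a 0 * a 2 + a 1 * a 2) - 16 * e ^ 2 - 16 * e - 4) * hsum

theorem abs_sub_two_mul_eq_abs_sub_two_mul_iff {R : Type*} [CommRing R] [LinearOrder R]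
    [IsStrictOrderedRing R] {A E c d : R} (hcd : c ≠ d) :
    |A - 2 * c * E| = |A - 2 * d * E| ↔ E = 0 ∨ (c + d) * E = A := by
  rw [abs_eq_abs]
  refine or_congr ⟨fun h => ?_, fun h => by simp [h]⟩ ⟨fun h => ?_, fun h => ?_⟩
  · have : (2 * (d - c)) * E = 0 := by linear_combination h
    simpa [sub_ne_zero.mpr hcd.symm] using this
  · have : (2 : R) * ((c + d) * E - A) = 0 := by linear_combination -h
    simpa [sub_eq_zero] using this
  · linear_combination -2 * h

/-- **Lemma on orders.** If `σ₁(a) = σ₁(b)` and `c ≠ d` are integers, then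
`|σ₃(q_c)| = |σ₃(q_d)|` iff either `σ₂(a) = σ₂(b)` or
`(c + d)(σ₂(a) − σ₂(b)) = (σ₃(a) − σ₃(b)) − (σ₁(a) + 1)(σ₂(a) − σ₂(b))`. -/
theorem abs_esymm_three_eq_iff (a b : Fin 3 → ℤ)
    (hsum : esymm 1 a = esymm 1 b) (c d : ℤ) (hcd : c ≠ d) :
    |esymm 3 (qTuple a b c)| = |esymm 3 (qTuple a b d)| ↔
      (esymm 2 a = esymm 2 b ∨
        (c + d) * (esymm 2 a - esymm 2 b) =
          (esymm 3 a - esymm 3 b) - (esymm 1 a + 1) * (esymm 2 a - esymm 2 b)) := by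
  rw [esymm_three_qTuple a b c hsum, esymm_three_qTuple a b d hsum, abs_mul, abs_mul,
    mul_right_inj' (by norm_num), abs_sub_two_mul_eq_abs_sub_two_mul_iff hcd, sub_eq_zero]
end

section
/- For every integer k ≥ 0, the triples a = (15015k + 12909, 0, 0) and b = (15015k + 12925, −3, −13) satisfy the Eschenburg freeness condition and a₁+a₂+a₃ = b₁+b₂+b₃, and for every integer c with −(a₂ + a₃ + 1) < 2c < −(b₂ + b₃ + 1) (equivalently, 0 ≤ c ≤ 7) there exist indices with {i,j,k'} = {1,2,3} and ℓ ∈ {1,2,3} such that gcd(aᵢ + aⱼ + 1 + 2c, a_{k'} − b_ℓ) ≠ 1. -/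
/-!
Write `N = 15015k + 12909`, so that `a = (N, 0, 0)` and `b = (N + 16, -3, -13)`. All the gcds
involved depend only on `N` modulo `15015 = 3·5·7·11·13`, and `N ≡ 0, 4, 1, 6, 0` modulo
`3, 5, 7, 11, 13`.

Freeness: the six gcds are `gcd(16, 3)`, `gcd(16, 13)`, `gcd(N + 3, 13)`,
`gcd(N + 3, N + 16) = gcd(N + 3, 13)`, `gcd(N + 13, 3)` and `gcd(N + 13, N + 16) = gcd(N + 13, 3)`,
all equal to `1` because `3 ∣ N` and `13 ∣ N`.

Obstruction: for each `c = 0, …, 7` one of the primes `3, 5, 7, 11, 13` divides either `N + 1 + 2c`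
and some `b_ℓ` (take `σ = id`), or `1 + 2c` and some `N - b_ℓ` (take `σ` swapping the first and
last index).
-/

def EschenburgFree (a b : Fin 3 → ℤ) : Prop :=
  ∀ σ : Equiv.Perm (Fin 3), Int.gcd (a 0 - b (σ 0)) (a 1 - b (σ 1)) = 1

def ExistsNontrivialGcd (a b : Fin 3 → ℤ) (c : ℤ) : Prop :=
  ∃ σ : Equiv.Perm (Fin 3), ∃ ℓ : Fin 3,
    Int.gcd (a (σ 0) + a (σ 1) + 1 + 2 * c) (a (σ 2) - b ℓ) ≠ 1

theorem Int.gcd_ne_one_of_dvd {d x y : ℤ} (hd : ¬IsUnit d) (hx : d ∣ x) (hy : d ∣ y) :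
    Int.gcd x y ≠ 1 :=
  fun h => hd ((Int.isCoprime_iff_gcd_eq_one.mpr h).isUnit_of_dvd' hx hy)

theorem EschenburgFree.of_gcd_eq_one {a b : Fin 3 → ℤ}
    (h01 : Int.gcd (a 0 - b 0) (a 1 - b 1) = 1) (h02 : Int.gcd (a 0 - b 0) (a 1 - b 2) = 1)
    (h10 : Int.gcd (a 0 - b 1) (a 1 - b 0) = 1) (h12 : Int.gcd (a 0 - b 1) (a 1 - b 2) = 1)
    (h20 : Int.gcd (a 0 - b 2) (a 1 - b 0) = 1) (h21 : Int.gcd (a 0 - b 2) (a 1 - b 1) = 1) :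
    EschenburgFree a b := by
  intro σ
  have hσ : σ 0 ≠ σ 1 := σ.injective.ne (by decide)
  generalize σ 0 = i, σ 1 = j at hσ ⊢
  fin_cases i <;> fin_cases j <;> first | exact absurd rfl hσ | assumption

section Family

variable {N c d : ℤ}

theorem ExistsNontrivialGcd.of_dvd_add {b : Fin 3 → ℤ} (ℓ : Fin 3) (hd : ¬IsUnit d)
    (hN : d ∣ N + 1 + 2 * c) (hb : d ∣ b ℓ) : ExistsNontrivialGcd ![N, 0, 0] b c :=
  ⟨1, ℓ, Int.gcd_ne_one_of_dvd hd (by simpa using hN) (by simpa using hb)⟩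

theorem ExistsNontrivialGcd.of_dvd_sub {b : Fin 3 → ℤ} (ℓ : Fin 3) (hd : ¬IsUnit d)
    (hc : d ∣ 1 + 2 * c) (hb : d ∣ N - b ℓ) : ExistsNontrivialGcd ![N, 0, 0] b c :=
  ⟨Equiv.swap 0 2, ℓ, Int.gcd_ne_one_of_dvd hd
    (by simpa [Equiv.swap_apply_of_ne_of_ne] using hc) (by simpa using hb)⟩

theorem eschenburgFree_of_dvd (h3 : 3 ∣ N) (h13 : 13 ∣ N) :
    EschenburgFree ![N, 0, 0] ![N + 16, -3, -13] := by
  have h13' : Int.gcd (N + 3) 13 = 1 := by rw [Int.gcd_add_left_left_of_dvd 3 h13]; rfl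
  have h3' : Int.gcd (N + 13) 3 = 1 := by rw [Int.gcd_add_left_left_of_dvd 13 h3]; rfl
  refine .of_gcd_eq_one ?_ ?_ ?_ ?_ ?_ ?_ <;>
    simp only [Matrix.cons_val_zero, Matrix.cons_val_one, Matrix.cons_val, sub_add_cancel_left,
      sub_neg_eq_add, zero_sub, Int.gcd_neg, Int.neg_gcd]
  · rfl
  · rfl
  · rwa [show N + 16 = N + 3 + 13 by ring, Int.gcd_self_add_right]
  · exact h13'
  · rwa [show N + 16 = N + 13 + 3 by ring, Int.gcd_self_add_right]
  · exact h3'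

theorem existsNontrivialGcd_of_emod (hN : N % 15015 = 12909) (hc₀ : 0 ≤ c) (hc₇ : c ≤ 7) :
    ExistsNontrivialGcd ![N, 0, 0] ![N + 16, -3, -13] c := by
  interval_cases c
  · exact .of_dvd_add (d := 5) 0 (by decide) (by omega) (show 5 ∣ N + 16 by omega)
  · exact .of_dvd_sub (d := 3) 1 (by decide) (by norm_num) (show 3 ∣ N - -3 by omega)
  · exact .of_dvd_add (d := 11) 0 (by decide) (by omega) (show 11 ∣ N + 16 by omega)
  · exact .of_dvd_sub (d := 7) 2 (by decide) (by norm_num) (show 7 ∣ N - -13 by omega)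
  · exact .of_dvd_sub (d := 3) 1 (by decide) (by norm_num) (show 3 ∣ N - -3 by omega)
  · exact .of_dvd_add (d := 5) 0 (by decide) (by omega) (show 5 ∣ N + 16 by omega)
  · exact .of_dvd_sub (d := 13) 2 (by decide) (by norm_num) (show 13 ∣ N - -13 by omega)
  · exact .of_dvd_sub (d := 3) 1 (by decide) (by norm_num) (show 3 ∣ N - -3 by omega)

end Family

theorem no_positive_bazaikin_family_two_general (k : ℤ)
    (a b : Fin 3 → ℤ)
    (ha : a = ![15015 * k + 12909, 0, 0]) (hb : b = ![15015 * k + 12925, -3, -13]) :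
    (∀ σ : Equiv.Perm (Fin 3), Int.gcd (a 0 - b (σ 0)) (a 1 - b (σ 1)) = 1) ∧
    (a 0 + a 1 + a 2 = b 0 + b 1 + b 2) ∧
    (∀ c : ℤ, -(a 1 + a 2 + 1) < 2 * c → 2 * c < -(b 1 + b 2 + 1) →
      ∃ σ : Equiv.Perm (Fin 3), ∃ ℓ : Fin 3,
        Int.gcd (a (σ 0) + a (σ 1) + 1 + 2 * c) (a (σ 2) - b ℓ) ≠ 1) := by
  obtain rfl : b = ![15015 * k + 12909 + 16, -3, -13] := by rw [hb]; ring_nf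
  subst ha
  refine ⟨eschenburgFree_of_dvd (by omega) (by omega), ?_, fun c hc₀ hc₇ => ?_⟩
  · simp only [Matrix.cons_val_zero, Matrix.cons_val_one, Matrix.cons_val]; ring
  · simp only [Matrix.cons_val_one, Matrix.cons_val] at hc₀ hc₇
    exact existsNontrivialGcd_of_emod (by omega) (by omega) (by omega)

/-- **a second cohomogeneity-two family with no positively curved embedding.**
For every integer `k ≥ 0`, the triples `a = (15015k + 12909, 0, 0)` and
`b = (15015k + 12925, −3, −13)` satisfy the Eschenburg freeness condition and
`a₁+a₂+a₃ = b₁+b₂+b₃`, and for every integer `c` with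
`−(a₂+a₃+1) < 2c < −(b₂+b₃+1)` (equivalently `0 ≤ c ≤ 7`) there are indices with
`{i,j,k'} = {1,2,3}` and `ℓ ∈ {1,2,3}` such that
`gcd(aᵢ + aⱼ + 1 + 2c, a_{k'} − b_ℓ) ≠ 1`. -/
theorem no_positive_bazaikin_family_two (k : ℤ) (hk : 0 ≤ k)
    (a b : Fin 3 → ℤ)
    (ha : a = ![15015 * k + 12909, 0, 0]) (hb : b = ![15015 * k + 12925, -3, -13]) :
    (∀ σ : Equiv.Perm (Fin 3), Int.gcd (a 0 - b (σ 0)) (a 1 - b (σ 1)) = 1) ∧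
    (a 0 + a 1 + a 2 = b 0 + b 1 + b 2) ∧
    (∀ c : ℤ, -(a 1 + a 2 + 1) < 2 * c → 2 * c < -(b 1 + b 2 + 1) →
      ∃ σ : Equiv.Perm (Fin 3), ∃ ℓ : Fin 3,
        Int.gcd (a (σ 0) + a (σ 1) + 1 + 2 * c) (a (σ 2) - b ℓ) ≠ 1) :=
  no_positive_bazaikin_family_two_general k a b ha hb
end
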